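/- arXiv:1503.02784 — 2 statements merged into one kernel-verified Lean document; each statement's English description precedes it below -/
import Mathlib

section
/- Let ℓ ≥ 1 and n ≥ 2ℓ+1 be integers, let x ∈ ℝ, and fix an index i ∈ {1,…,n}. For any y_1,…,y_n ∈ ℝ with y_j = x for all j ≠ i (y_i arbitrary), the 2ℓ-rejection average satisfies ψ_ℓ(y_1,…,y_n) = x. In particular a single sensor's report, however chosen, cannot move the estimate away from x when all other sensors report truthfully; this is the core of the statement that truth-telling is an equilibrium for the 2ℓ-rejection averaging estimator for every ℓ ∈ {1,…,⌊(n−1)/2⌋}. -/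
/-- The `j`-th order statistic (0-indexed) of the tuple `y`: the value in
position `j` once the values `y 0, …, y (n-1)` are arranged in nondecreasing order. -/
noncomputable def orderStat {n : ℕ} (y : Fin n → ℝ) (j : Fin n) : ℝ :=
  y (Tuple.sort y j)

/-- The `2ℓ`-rejection average (trimmed mean): the average of the order statistics in
(1-indexed) positions `ℓ+1, …, n-ℓ`, i.e. 0-indexed positions `ℓ, …, n-ℓ-1`. -/
noncomputable def trimmedMean (ℓ : ℕ) {n : ℕ} (y : Fin n → ℝ) : ℝ :=
  (∑ j ∈ Finset.univ.filter (fun j : Fin n => ℓ ≤ (j : ℕ) ∧ (j : ℕ) < n - ℓ),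
      orderStat y j) / ((n : ℝ) - 2 * ℓ)

/-- The median estimator: the middle order statistic for odd `n`, and the average of
the two middle order statistics for even `n`. -/
noncomputable def medianEst {n : ℕ} (y : Fin n → ℝ) : ℝ :=
  if h : 0 < n then
    if n % 2 = 1 then orderStat y ⟨n / 2, Nat.div_lt_self h one_lt_two⟩
    else (orderStat y ⟨n / 2 - 1, lt_of_le_of_lt (Nat.sub_le _ _) (Nat.div_lt_self h one_lt_two)⟩
        + orderStat y ⟨n / 2, Nat.div_lt_self h one_lt_two⟩) / 2
  else 0

/-- **Truth-telling is an equilibrium for the `2ℓ`-rejection averaging estimator** (core fact).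
If all sensors `j ≠ i` report truthfully (`y j = x`), then whatever sensor `i` reports,
the `2ℓ`-rejection average equals `x`. -/
theorem trimmedMean_truthful_equilibrium
    (ℓ n : ℕ) (hℓ : 1 ≤ ℓ) (hn : 2 * ℓ + 1 ≤ n) (x : ℝ) (i : Fin n)
    (y : Fin n → ℝ) (hy : ∀ j : Fin n, j ≠ i → y j = x) :
    trimmedMean ℓ y = x := by
  unfold trimmedMean orderStat
  have σ := Tuple.sort y
  have hmono := Tuple.monotone_sort y
  have key : ∀ j : Fin n, ℓ ≤ (j : ℕ) → (j : ℕ) < n - ℓ → y (Tuple.sort y j) = x := by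
    intro j hj1 hj2
    by_cases h : Tuple.sort y j = i
    · have hj1' : 1 ≤ (j : ℕ) := le_trans hℓ hj1
      have hjn : (j : ℕ) + 1 < n := by omega
      set jm : Fin n := ⟨(j : ℕ) - 1, by omega⟩
      set jp : Fin n := ⟨(j : ℕ) + 1, hjn⟩
      have h1 : Tuple.sort y jm ≠ i := by
        intro hc
        have : jm = j := (Tuple.sort y).injective (hc.trans h.symm)
        simp [jm, Fin.ext_iff] at this; omega
      have h2 : Tuple.sort y jp ≠ i := by
        intro hc
        have : jp = j := (Tuple.sort y).injective (hc.trans h.symm)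
        simp [jp, Fin.ext_iff] at this
      have l1 : y (Tuple.sort y jm) ≤ y (Tuple.sort y j) :=
        hmono (by simp [jm, Fin.le_def])
      have l2 : y (Tuple.sort y j) ≤ y (Tuple.sort y jp) :=
        hmono (by simp [jp, Fin.le_def])
      rw [hy _ h1] at l1; rw [hy _ h2] at l2
      linarith
    · exact hy _ h
  rw [Finset.sum_congr rfl (fun j hj => by
    simp only [Finset.mem_filter] at hj; exact key j hj.2.1 hj.2.2)]
  rw [Finset.sum_const]
  have hcard : (Finset.univ.filter (fun j : Fin n => ℓ ≤ (j : ℕ) ∧ (j : ℕ) < n - ℓ)).card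
      = n - 2 * ℓ := by
    rw [Finset.card_filter]
    rw [Fin.sum_univ_eq_sum_range (fun k => if ℓ ≤ k ∧ k < n - ℓ then 1 else 0)]
    rw [← Finset.card_filter]
    have : (Finset.range n).filter (fun k => ℓ ≤ k ∧ k < n - ℓ) = Finset.Ico ℓ (n - ℓ) := by
      ext k; simp [Finset.mem_Ico]; omega
    rw [this, Nat.card_Ico]; omega
  rw [hcard]
  have : ((n : ℝ) - 2 * ℓ) ≠ 0 := by
    have : (2*ℓ:ℕ) < n := by omega
    have : (2*ℓ:ℝ) < n := by exact_mod_cast this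
    push_cast; linarith
  rw [nsmul_eq_mul]
  push_cast [Nat.cast_sub (by omega : 2*ℓ ≤ n)]
  field_simp
end

section
/- Let c_1,…,c_n be positive integers with n > 1, let c = ∑_{j=1}^n c_j, and let ℓ be an integer with max_{i∈{1,…,n}} c_i ≤ ℓ ≤ ⌊(c−1)/2⌋. Fix x ∈ ℝ and a coalition i ∈ {1,…,n}. For any reports y_1,…,y_c ∈ ℝ (one report per coalition member) such that all reports submitted by coalitions other than i equal x — i.e., at most c_i of the c reports differ from x — the 2ℓ-rejection average satisfies ψ_ℓ(y_1,…,y_c) = x. This is the core of the theorem that, when ∑_{j≠i} c_j ≥ c_i + 1 for all i, truth-telling is an equilibrium for the 2ℓ-rejection averaging estimator with max_i c_i ≤ ℓ ≤ ⌊(∑_j c_j − 1)/2⌋ even when sensors form coalitions of sizes c_1,…,c_n. -/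
lemma card_filter_comp_perm {N : ℕ} (e : Equiv.Perm (Fin N)) (p : Fin N → Prop)
    [DecidablePred p] :
    (Finset.univ.filter (fun j => p (e j))).card = (Finset.univ.filter p).card := by
  apply Finset.card_bij' (fun j _ => e j) (fun k _ => e.symm k) <;>
    intro a ha <;> simp_all

/-- **Truth-telling is an equilibrium for the `2ℓ`-rejection averaging estimator under
coalitions** (core fact). Coalitions `1, …, n` submit `c 1, …, c n` reports each,
`c = ∑ j, c j` reports in total. If `max_i c i ≤ ℓ ≤ ⌊(c-1)/2⌋` and all the reports of
coalitions other than `i` equal `x` — i.e. at most `c i` of the `c` reports differ from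
`x` — then the `2ℓ`-rejection average equals `x`. -/
theorem trimmedMean_coalition_truthful_equilibrium
    (n : ℕ) (hn : 1 < n) (c : Fin n → ℕ) (hc : ∀ j : Fin n, 1 ≤ c j)
    (ℓ : ℕ) (hℓ₁ : ∀ j : Fin n, c j ≤ ℓ) (hℓ₂ : ℓ ≤ ((∑ j, c j) - 1) / 2)
    (x : ℝ) (i : Fin n) (y : Fin (∑ j, c j) → ℝ)
    (hy : (Finset.univ.filter (fun k : Fin (∑ j, c j) => y k ≠ x)).card ≤ c i) :
    trimmedMean ℓ y = x := by
  classical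
  have hNn : n ≤ ∑ j, c j := by
    calc n = ∑ _j : Fin n, 1 := by simp
    _ ≤ ∑ j, c j := Finset.sum_le_sum (fun j _ => hc j)
  have hN2 : 2 ≤ ∑ j, c j := le_trans hn hNn
  have h2ℓ : 2 * ℓ ≤ (∑ j, c j) - 1 := by
    have := (Nat.le_div_iff_mul_le (by norm_num : 0 < 2)).mp hℓ₂
    omega
  have h2ℓ' : 2 * ℓ < ∑ j, c j := by omega
  have hmono : Monotone (orderStat y) := Tuple.monotone_sort y
  have hlt : (Finset.univ.filter (fun k : Fin (∑ j, c j) => y k < x)).card ≤ ℓ := by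
    refine le_trans (le_trans (Finset.card_le_card ?_) hy) (hℓ₁ i)
    intro k hk
    simp only [Finset.mem_filter] at hk ⊢
    exact ⟨hk.1, ne_of_lt hk.2⟩
  have hgt : (Finset.univ.filter (fun k : Fin (∑ j, c j) => x < y k)).card ≤ ℓ := by
    refine le_trans (le_trans (Finset.card_le_card ?_) hy) (hℓ₁ i)
    intro k hk
    simp only [Finset.mem_filter] at hk ⊢
    exact ⟨hk.1, (ne_of_lt hk.2).symm⟩
  have hzlt : (Finset.univ.filter (fun j : Fin (∑ j, c j) => orderStat y j < x)).card ≤ ℓ :=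
    le_trans (le_of_eq (card_filter_comp_perm (Tuple.sort y) (fun k => y k < x))) hlt
  have hzgt : (Finset.univ.filter (fun j : Fin (∑ j, c j) => x < orderStat y j)).card ≤ ℓ :=
    le_trans (le_of_eq (card_filter_comp_perm (Tuple.sort y) (fun k => x < y k))) hgt
  have hval : ∀ j ∈ Finset.univ.filter
      (fun j : Fin (∑ j, c j) => ℓ ≤ (j : ℕ) ∧ (j : ℕ) < (∑ j, c j) - ℓ),
      orderStat y j = x := by
    intro j hj
    simp only [Finset.mem_filter] at hj
    obtain ⟨-, hj1, hj2⟩ := hj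
    by_contra hne
    rcases lt_or_gt_of_ne hne with h | h
    · have hsub : Finset.Iic j ⊆
          Finset.univ.filter (fun j' : Fin (∑ j, c j) => orderStat y j' < x) := by
        intro j' hj'
        simp only [Finset.mem_Iic] at hj'
        simp only [Finset.mem_filter, Finset.mem_univ, true_and]
        exact lt_of_le_of_lt (hmono hj') h
      have := Finset.card_le_card hsub
      rw [Fin.card_Iic] at this
      omega
    · have hsub : Finset.Ici j ⊆
          Finset.univ.filter (fun j' : Fin (∑ j, c j) => x < orderStat y j') := by
        intro j' hj'
        simp only [Finset.mem_Ici] at hj'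
        simp only [Finset.mem_filter, Finset.mem_univ, true_and]
        exact lt_of_lt_of_le h (hmono hj')
      have := Finset.card_le_card hsub
      rw [Fin.card_Ici] at this
      omega
  have hcard : (Finset.univ.filter
      (fun j : Fin (∑ j, c j) => ℓ ≤ (j : ℕ) ∧ (j : ℕ) < (∑ j, c j) - ℓ)).card
      = (∑ j, c j) - 2 * ℓ := by
    have heq : (Finset.univ.filter
        (fun j : Fin (∑ j, c j) => ℓ ≤ (j : ℕ) ∧ (j : ℕ) < (∑ j, c j) - ℓ)).card
        = (Finset.Ico ℓ ((∑ j, c j) - ℓ)).card := by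
      refine Finset.card_bij (fun j _ => (j : ℕ)) ?_ ?_ ?_
      · intro a ha
        simp only [Finset.mem_filter] at ha
        simp only [Finset.mem_Ico]
        exact ⟨ha.2.1, ha.2.2⟩
      · intro a _ b _ h; exact Fin.val_injective h
      · intro b hb
        simp only [Finset.mem_Ico] at hb
        refine ⟨⟨b, by omega⟩, ?_, rfl⟩
        simp only [Finset.mem_filter, Finset.mem_univ, true_and]
        exact ⟨hb.1, hb.2⟩
    rw [heq, Nat.card_Ico]; omega
  have hsum : ∑ j ∈ Finset.univ.filter
      (fun j : Fin (∑ j, c j) => ℓ ≤ (j : ℕ) ∧ (j : ℕ) < (∑ j, c j) - ℓ),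
      orderStat y j = (((∑ j, c j) : ℝ) - 2 * ℓ) * x := by
    rw [Finset.sum_congr rfl hval, Finset.sum_const, hcard, nsmul_eq_mul]
    congr 1
    push_cast [Nat.cast_sub (le_of_lt h2ℓ')]
    ring
  have hne : (((∑ j, c j) : ℝ) - 2 * ℓ) ≠ 0 := by
    have : (2 * ℓ : ℝ) < ((∑ j, c j) : ℝ) := by exact_mod_cast h2ℓ'
    linarith
  rw [trimmedMean, hsum, Nat.cast_sum]
  exact mul_div_cancel_left₀ x hne
end
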